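/- Let M be a nonempty compact subset of ℝ^{n₀} and let σ : ℝ → ℝ be a continuous monotone activation function. Then every network function F ∈ NN_σ(n₀), i.e. every network function F : ℝ^{n₀} → ℝ with activation σ whose every layer has width at most n₀, attains its minimum value over M at a point of the boundary ∂M; that is, there exists x* ∈ ∂M with F(x*) = min_{x∈M} F(x). -/

import Mathlib

noncomputable section

/-- The rectified linear unit. -/
def ReLU (t : ℝ) : ℝ := max t 0

/-- `IsNetChain σ m F` : `F` is a network function of the form
`W_L ∘ A_{L-1} ∘ ⋯ ∘ A_1 + b_L` where `A_j x = σ (W_j x + b_j)` (with `σ` applied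
componentwise), and all layer widths `n_1,…,n_L` are at most `m`. -/
inductive IsNetChain (σ : ℝ → ℝ) (m : ℕ) : {a b : ℕ} → ((Fin a → ℝ) → (Fin b → ℝ)) → Prop
  | last {a b : ℕ} (W : Matrix (Fin b) (Fin a) ℝ) (v : Fin b → ℝ) (hb : b ≤ m) :
      IsNetChain σ m (fun x => W.mulVec x + v)
  | hidden {a b c : ℕ} (W : Matrix (Fin b) (Fin a) ℝ) (v : Fin b → ℝ)
      {g : (Fin b → ℝ) → (Fin c → ℝ)} (hb : b ≤ m) (hg : IsNetChain σ m g) :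
      IsNetChain σ m (fun x => g (fun i => σ (W.mulVec x i + v i)))

/-- Scalar-output network functions of width at most `m`; the class `NN_σ(m)`. -/
def IsScalarNet (σ : ℝ → ℝ) (m : ℕ) {n₀ : ℕ} (F : (Fin n₀ → ℝ) → ℝ) : Prop :=
  ∃ G : (Fin n₀ → ℝ) → (Fin 1 → ℝ), IsNetChain σ m G ∧ ∀ x, F x = G x 0

/-!
The minimum is pushed to the boundary one layer at a time. If the network is affine, or its
first layer `x ↦ σ (W x + b)` has a kernel direction, then `F` is nonincreasing along a ray from a
minimiser, and that ray leaves the compact set `M` through its boundary. Otherwise, as all widths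
are at most `n₀`, `W` is square and invertible, and the layer maps `M` onto a compact set each of
whose boundary points comes from a boundary point of `M`. For the coordinatewise map `σ` this is
checked one coordinate at a time: the fibre over `y` is then a segment, and if both of its ends
were interior points of `M`, the intermediate value theorem near those ends would make `y` an
interior point of the image. The remaining layers are handled by induction on the depth.
-/

open Set Function Filter Topology Metric

section LiftsFrontier

variable {X Y Z : Type*} [TopologicalSpace X] [TopologicalSpace Y] [TopologicalSpace Z]

def LiftsFrontier (f : X → Y) : Prop :=
  ∀ K : Set X, IsCompact K → ∀ y ∈ frontier (f '' K), ∃ z ∈ frontier K, f z = y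

lemma LiftsFrontier.id : LiftsFrontier (id : X → X) := fun _ _ y hy =>
  ⟨y, by simpa using hy, rfl⟩

lemma LiftsFrontier.comp {f : Y → Z} {g : X → Y} (hf : LiftsFrontier f) (hg : LiftsFrontier g)
    (hgc : Continuous g) : LiftsFrontier (f ∘ g) := by
  intro K hK y hy
  rw [image_comp] at hy
  obtain ⟨y', hy', rfl⟩ := hf _ (hK.image hgc) y hy
  obtain ⟨z, hz, rfl⟩ := hg K hK y' hy'
  exact ⟨z, hz, rfl⟩

lemma Homeomorph.liftsFrontier (h : X ≃ₜ Y) : LiftsFrontier h := by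
  intro K _ y hy
  rwa [← h.image_frontier] at hy

end LiftsFrontier

lemma dist_update_update_lt {ι : Type*} [Fintype ι] [DecidableEq ι] {π : ι → Type*}
    [∀ i, PseudoMetricSpace (π i)] {x y : ∀ i, π i} (i : ι) {s t : π i} {δ : ℝ}
    (hxy : dist x y < δ) (hst : dist s t < δ) : dist (update x i s) (update y i t) < δ := by
  refine (dist_pi_lt_iff (dist_nonneg.trans_lt hst)).2 fun j => ?_
  rcases eq_or_ne j i with rfl | hj
  · simpa using hst
  · simpa [hj] using (dist_le_pi_dist x y j).trans_lt hxy

lemma image_Icc_union_Icc_mem_nhds {σ : ℝ → ℝ} (hσc : Continuous σ)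
    (hσm : Monotone σ ∨ Antitone σ) {a' a b b' : ℝ} (ha' : a' ≤ a) (hb' : b ≤ b')
    (hab : σ a = σ b) (ha'σ : σ a' ≠ σ a) (hb'σ : σ b' ≠ σ b) :
    σ '' (Icc a' a ∪ Icc b b') ∈ 𝓝 (σ a) := by
  have hbetween : σ a ∈ uIoo (σ a') (σ b') := by
    rcases hσm with hσ | hσ
    · exact mem_uIoo_of_lt ((hσ ha').lt_of_ne ha'σ) (hab ▸ (hσ hb').lt_of_ne' hb'σ)
    · exact mem_uIoo_of_gt (hab ▸ (hσ hb').lt_of_ne hb'σ) ((hσ ha').lt_of_ne' ha'σ)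
  refine mem_of_superset (isOpen_Ioo.mem_nhds hbetween) ?_
  calc uIoo (σ a') (σ b') ⊆ uIcc (σ a') (σ a) ∪ uIcc (σ b) (σ b') :=
        hab ▸ uIoo_subset_uIcc_self.trans uIcc_subset_uIcc_union_uIcc
    _ ⊆ σ '' uIcc a' a ∪ σ '' uIcc b b' :=
        union_subset_union (intermediate_value_uIcc hσc.continuousOn)
          (intermediate_value_uIcc hσc.continuousOn)
    _ = σ '' (Icc a' a ∪ Icc b b') := by rw [image_union, uIcc_of_le ha', uIcc_of_le hb']

section CoordinatewiseActivation

variable {ι : Type*} [Fintype ι] [DecidableEq ι] {σ : ℝ → ℝ}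

lemma liftsFrontier_update_apply (hσc : Continuous σ) (hσm : Monotone σ ∨ Antitone σ) (i : ι) :
    LiftsFrontier fun x : ι → ℝ => update x i (σ (x i)) := by
  intro K hK y hy
  set ψ := fun x : ι → ℝ => update x i (σ (x i))
  have hψ : Continuous ψ := continuous_id.update i (hσc.comp (continuous_apply i))
  have hline : Continuous (update y i) := continuous_const.update i continuous_id
  by_contra! hint
  -- the fibre `ψ ⁻¹' {y}` is a segment in direction `i`, parametrised by `S`
  set S := {t | update y i t ∈ K ∧ σ t = y i}
  have hSint : ∀ t ∈ S, update y i t ∈ interior K := by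
    rintro t ⟨htK, hty⟩
    rw [← self_sdiff_frontier]
    exact ⟨htK, fun hfr => hint _ hfr (by simp [ψ, hty])⟩
  have hSc : IsCompact S := by
    refine (hK.image (continuous_apply i)).of_isClosed_subset
      ((hK.isClosed.preimage hline).inter (isClosed_singleton.preimage hσc)) ?_
    rintro t ⟨htK, -⟩
    exact ⟨_, htK, update_self ..⟩
  have hSne : S.Nonempty := by
    obtain ⟨x, hxK, rfl⟩ := (hK.image hψ).isClosed.frontier_subset hy
    exact ⟨x i, by simpa [ψ] using hxK, by simp [ψ]⟩
  obtain ⟨a, haS, ha⟩ := hSc.exists_isLeast hSne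
  obtain ⟨b, hbS, hb⟩ := hSc.exists_isGreatest hSne
  obtain ⟨δa, hδa, hballa⟩ := Metric.isOpen_iff.1 isOpen_interior _ (hSint a haS)
  obtain ⟨δb, hδb, hballb⟩ := Metric.isOpen_iff.1 isOpen_interior _ (hSint b hbS)
  set δ := min δa δb
  have hδ : 0 < δ := lt_min hδa hδb
  have hK_of_near : ∀ w t, dist w y < δ → dist t a < δ ∨ dist t b < δ → update w i t ∈ K := by
    rintro w t hw (ht | ht)
    · exact interior_subset <| hballa <|
        dist_update_update_lt i (hw.trans_le (min_le_left ..)) (ht.trans_le (min_le_left ..))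
    · exact interior_subset <| hballb <|
        dist_update_update_lt i (hw.trans_le (min_le_right ..)) (ht.trans_le (min_le_right ..))
  have hnear_a : ∀ t ∈ Icc (a - δ / 2) a, dist t a < δ := fun t ht => by
    rw [Real.dist_eq, abs_lt]; constructor <;> linarith [ht.1, ht.2]
  have hnear_b : ∀ t ∈ Icc b (b + δ / 2), dist t b < δ := fun t ht => by
    rw [Real.dist_eq, abs_lt]; constructor <;> linarith [ht.1, ht.2]
  have hσa' : σ (a - δ / 2) ≠ σ a := fun h => by
    have : a ≤ a - δ / 2 := ha ⟨hK_of_near y _ (by simpa using hδ)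
      (Or.inl (hnear_a _ ⟨le_rfl, by linarith⟩)), h.trans haS.2⟩
    linarith
  have hσb' : σ (b + δ / 2) ≠ σ b := fun h => by
    have : b + δ / 2 ≤ b := hb ⟨hK_of_near y _ (by simpa using hδ)
      (Or.inr (hnear_b _ ⟨by linarith, le_rfl⟩)), h.trans hbS.2⟩
    linarith
  have hyi : σ '' (Icc (a - δ / 2) a ∪ Icc b (b + δ / 2)) ∈ 𝓝 (y i) := haS.2 ▸
    image_Icc_union_Icc_mem_nhds hσc hσm (by linarith) (by linarith) (haS.2.trans hbS.2.symm)
      hσa' hσb'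
  have himage : ψ '' K ∈ 𝓝 y := by
    filter_upwards [ball_mem_nhds y hδ, (continuous_apply i).continuousAt.preimage_mem_nhds hyi]
      with w hw ⟨t, ht, htw⟩
    refine ⟨update w i t, hK_of_near w t hw ?_, by simp [ψ, htw]⟩
    exact ht.imp (hnear_a t) (hnear_b t)
  exact hy.2 (mem_interior_iff_mem_nhds.2 himage)

lemma liftsFrontier_piecewise (hσc : Continuous σ) (hσm : Monotone σ ∨ Antitone σ)
    (s : Finset ι) : LiftsFrontier fun x : ι → ℝ => s.piecewise (fun j => σ (x j)) x := by
  induction s using Finset.induction_on with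
  | empty =>
    simp only [Finset.piecewise_empty]
    exact LiftsFrontier.id
  | insert i s hi ih =>
    have hcont : Continuous fun x : ι → ℝ => s.piecewise (fun j => σ (x j)) x :=
      continuous_pi fun j => by
        by_cases hj : j ∈ s <;> simp only [Finset.piecewise, hj, if_true, if_false] <;> fun_prop
    have hstep : (fun x : ι → ℝ => (insert i s).piecewise (fun j => σ (x j)) x) =
        (fun x => update x i (σ (x i))) ∘ fun x => s.piecewise (fun j => σ (x j)) x := by
      funext x
      simp [Finset.piecewise_insert, Finset.piecewise_eq_of_notMem _ _ _ hi]
    rw [hstep]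
    exact (liftsFrontier_update_apply hσc hσm i).comp ih hcont

lemma liftsFrontier_comp_apply (hσc : Continuous σ) (hσm : Monotone σ ∨ Antitone σ) :
    LiftsFrontier fun (x : ι → ℝ) j => σ (x j) := by
  simpa using liftsFrontier_piecewise hσc hσm Finset.univ

end CoordinatewiseActivation

def HasMinOnFrontier {X : Type*} [TopologicalSpace X] (f : X → ℝ) : Prop :=
  ∀ M : Set X, IsCompact M → M.Nonempty → ∃ x ∈ frontier M, x ∈ M ∧ ∀ y ∈ M, f x ≤ f y

lemma HasMinOnFrontier.comp {X Y : Type*} [TopologicalSpace X] [T2Space X] [TopologicalSpace Y]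
    {g : Y → ℝ} {L : X → Y} (hg : HasMinOnFrontier g) (hL : LiftsFrontier L)
    (hLc : Continuous L) : HasMinOnFrontier (g ∘ L) := by
  intro M hM hMne
  obtain ⟨y, hyfr, -, hy⟩ := hg _ (hM.image hLc) (hMne.image L)
  obtain ⟨z, hzfr, rfl⟩ := hL M hM y hyfr
  exact ⟨z, hzfr, hM.isClosed.frontier_subset hzfr, fun x hx => hy _ (mem_image_of_mem L hx)⟩

section Descent

variable {E : Type*} [NormedAddCommGroup E] [NormedSpace ℝ E]

lemma exists_nonneg_add_smul_mem_frontier {M : Set E} (hM : IsCompact M) {x v : E} (hx : x ∈ M)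
    (hv : v ≠ 0) : ∃ t : ℝ, 0 ≤ t ∧ x + t • v ∈ frontier M := by
  set γ : ℝ → E := fun t => x + t • v
  have hγ : IsClosedEmbedding γ :=
    (Homeomorph.addLeft x).isClosedEmbedding.comp (isClosedEmbedding_smul_left hv)
  have hS : IsCompact (γ ⁻¹' M ∩ Ici 0) := (hγ.isCompact_preimage hM).inter_right isClosed_Ici
  obtain ⟨t, ⟨htM, ht⟩, htmax⟩ := hS.exists_isGreatest ⟨0, by simpa [γ] using hx, mem_Ici.2 le_rfl⟩
  refine ⟨t, ht, subset_closure htM, fun hint => ?_⟩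
  have hnear : ∀ᶠ s in 𝓝 t, γ s ∈ interior M :=
    hγ.continuous.continuousAt.preimage_mem_nhds (isOpen_interior.mem_nhds hint)
  obtain ⟨s, hts, hs⟩ := hnear.exists_gt
  exact hts.not_ge (htmax ⟨interior_subset (s := M) hs, ht.trans hts.le⟩)

lemma hasMinOnFrontier_of_le_add_smul {f : E → ℝ} (hf : Continuous f) {v : E} (hv : v ≠ 0)
    (hdesc : ∀ x, ∀ t : ℝ, 0 ≤ t → f (x + t • v) ≤ f x) : HasMinOnFrontier f := by
  intro M hM hMne
  obtain ⟨x, hxM, hmin⟩ := hM.exists_isMinOn hMne hf.continuousOn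
  obtain ⟨t, ht, hfr⟩ := exists_nonneg_add_smul_mem_frontier hM hxM hv
  exact ⟨_, hfr, hM.isClosed.frontier_subset hfr, fun y hy => (hdesc x t ht).trans (hmin hy)⟩

lemma hasMinOnFrontier_affine [Nontrivial E] (ℓ : E →L[ℝ] ℝ) (c : ℝ) :
    HasMinOnFrontier fun x => ℓ x + c := by
  obtain ⟨u, hu⟩ := exists_ne (0 : E)
  obtain ⟨v, hv, hℓv⟩ : ∃ v : E, v ≠ 0 ∧ ℓ v ≤ 0 := by
    rcases le_total (ℓ u) 0 with h | h
    · exact ⟨u, hu, h⟩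
    · exact ⟨-u, neg_ne_zero.2 hu, by simpa using h⟩
  refine hasMinOnFrontier_of_le_add_smul (by fun_prop) hv fun x t ht => ?_
  simp only [map_add, map_smul, smul_eq_mul]
  linarith [mul_nonpos_of_nonneg_of_nonpos ht hℓv]

end Descent

namespace IsNetChain

variable {σ : ℝ → ℝ} {m a b : ℕ} {G : (Fin a → ℝ) → (Fin b → ℝ)}

lemma continuous (hσc : Continuous σ) (hG : IsNetChain σ m G) : Continuous G := by
  induction hG with
  | last W v => exact W.mulVecLin.continuous_of_finiteDimensional.add continuous_const
  | hidden W v _ _ ih =>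
    exact ih.comp (continuous_pi fun i => hσc.comp
      (((continuous_apply i).comp W.mulVecLin.continuous_of_finiteDimensional).add
        continuous_const))

theorem hasMinOnFrontier (hσc : Continuous σ) (hσm : Monotone σ ∨ Antitone σ)
    (hG : IsNetChain σ m G) (ha : m ≤ a) (j : Fin b) : HasMinOnFrontier fun x => G x j := by
  induction hG with
  | @last a b W v hb =>
    have : Nonempty (Fin a) := ⟨⟨0, by have := j.pos; omega⟩⟩
    simpa [Matrix.mulVecLin_apply] using hasMinOnFrontier_affine
      (LinearMap.toContinuousLinearMap (LinearMap.proj j ∘ₗ W.mulVecLin)) (v j)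
  | @hidden a b c W v g hb hg ih =>
    by_cases hinj : Injective W.mulVecLin
    · obtain rfl : b = a := le_antisymm (hb.trans ha)
        (by simpa using LinearMap.finrank_le_finrank_of_injective hinj)
      let T : (Fin b → ℝ) ≃ₜ (Fin b → ℝ) :=
        (LinearEquiv.ofInjectiveEndo _ hinj).toContinuousLinearEquiv.toHomeomorph.trans
          (Homeomorph.addRight v)
      exact (ih ha j).comp ((liftsFrontier_comp_apply hσc hσm).comp T.liftsFrontier T.continuous)
        (by fun_prop)
    · obtain ⟨z, hWz, hz⟩ :=
        Submodule.exists_mem_ne_zero_of_ne_bot (mt LinearMap.ker_eq_bot.1 hinj)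
      replace hWz : W.mulVec z = 0 := hWz
      refine hasMinOnFrontier_of_le_add_smul ((continuous_apply j).comp ((hg.continuous hσc).comp
        (by fun_prop))) hz fun x t _ => le_of_eq ?_
      simp [Matrix.mulVec_add, Matrix.mulVec_smul, hWz]

end IsNetChain

/-- **Minimum principle.** For a continuous monotone activation `σ`, every
scalar network function of width at most the input dimension `n₀` attains its minimum
over a nonempty compact set `M` at a boundary point of `M`. -/
theorem minimum_principle
    (n₀ : ℕ) (M : Set (Fin n₀ → ℝ)) (hM : IsCompact M) (hMne : M.Nonempty)
    (σ : ℝ → ℝ) (hσc : Continuous σ) (hσm : Monotone σ ∨ Antitone σ)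
    (F : (Fin n₀ → ℝ) → ℝ) (hF : IsScalarNet σ n₀ F) :
    ∃ x₀ ∈ frontier M, x₀ ∈ M ∧ ∀ x ∈ M, F x₀ ≤ F x := by
  obtain ⟨G, hG, hFG⟩ := hF
  obtain rfl : F = fun x => G x 0 := funext hFG
  exact hG.hasMinOnFrontier hσc hσm le_rfl 0 M hM hMne
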